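/- Let (x,v) be a solution of the perturbed Cucker-Smale system ẋ_i = v_i, v̇_i = (1/N) Σ_{j=1}^N a(‖x_i − x_j‖)(v_j − v_i) + α(t)(v̄ − v_i) + β(t) Δ_i(t), with β(t) > 0 for all t. Suppose there are T ≥ 0, a function φ : [T,∞) → [0,ℓ] with ℓ < (min_{t ≥ T} α(t)) / (max_{t ≥ T} β(t)), such that Σ_{i=1}^N Δ_i(t)·v_i^⊥(t) ≤ φ(t) Σ_{i=1}^N ‖v_i^⊥(t)‖² for every t ≥ T. Then V(t) ≤ V(T) exp(2 ∫_T^t β(s)(ℓ − α(s)/β(s)) ds) for all t ≥ T, V(t) → 0 exponentially fast, and (x,v) tends to consensus. -/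

import Mathlib

/-!
`V = B(v, v)` is `N⁻¹ ∑ᵢ ‖vᵢ^⊥‖²`, and along the flow `V' = 2 B(v, v̇)`. In `B(v, v̇)` the
alignment term is dissipative because the interaction kernel is symmetric and nonnegative, the
relaxation term contributes `-α V` and the perturbation at most `β ℓ V`, so
`V' ≤ 2 (β ℓ - α) V`. Integrating `(log V)'` gives the stated bound, and since
`β ℓ - α ≤ -(α_min - ℓ β_max) < 0` on `[T, ∞)`, Grönwall's inequality gives exponential decay.
-/

open scoped BigOperators InnerProductSpace
open MeasureTheory Filter

/-- The symmetric bilinear form `B(v,w) = (1/(2N²)) ∑ᵢ∑ⱼ (vᵢ-vⱼ)·(wᵢ-wⱼ)`. -/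
noncomputable def bform {d N : ℕ} (v w : Fin N → EuclideanSpace ℝ (Fin d)) : ℝ :=
  (2 * (N : ℝ) ^ 2)⁻¹ * ∑ i, ∑ j, ⟪v i - v j, w i - w j⟫_ℝ

noncomputable def meanVec {d N : ℕ} (v : Fin N → EuclideanSpace ℝ (Fin d)) :
    EuclideanSpace ℝ (Fin d) :=
  (N : ℝ)⁻¹ • ∑ i, v i

open Set Real

theorem sum_sum_mul_inner_sub_nonpos {ι E : Type*} [Fintype ι] [NormedAddCommGroup E]
    [InnerProductSpace ℝ E] (A : ι → ι → ℝ) (hA_symm : ∀ i j, A i j = A j i)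
    (hA_nonneg : ∀ i j, 0 ≤ A i j) (u : ι → E) :
    ∑ i, ∑ j, A i j * ⟪u i, u j - u i⟫_ℝ ≤ 0 := by
  have h_swap : ∑ i, ∑ j, A i j * ⟪u i, u j - u i⟫_ℝ
      = ∑ i, ∑ j, A i j * ⟪u j, u i - u j⟫_ℝ := by
    rw [Finset.sum_comm]
    simp only [hA_symm]
  have h_double : ∑ i, ∑ j, A i j * ⟪u i, u j - u i⟫_ℝ + ∑ i, ∑ j, A i j * ⟪u j, u i - u j⟫_ℝ
      = ∑ i, ∑ j, -(A i j * ‖u i - u j‖ ^ 2) := by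
    refine (Finset.sum_add_distrib.symm).trans (Finset.sum_congr rfl fun i _ => ?_)
    refine (Finset.sum_add_distrib.symm).trans (Finset.sum_congr rfl fun j _ => ?_)
    rw [← real_inner_self_eq_norm_sq]
    simp only [inner_sub_left, inner_sub_right, real_inner_comm (u i) (u j)]
    ring
  have h_nonpos : ∑ i, ∑ j, -(A i j * ‖u i - u j‖ ^ 2) ≤ 0 :=
    Finset.sum_nonpos fun i _ => Finset.sum_nonpos fun j _ =>
      neg_nonpos.mpr (mul_nonneg (hA_nonneg i j) (sq_nonneg _))
  linarith

theorem le_mul_exp_of_hasDerivAt_le_mul {f f' : ℝ → ℝ} {K a b : ℝ} (hab : a ≤ b)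
    (hf : ∀ x ∈ Icc a b, HasDerivAt f (f' x) x) (bound : ∀ x ∈ Ico a b, f' x ≤ K * f x) :
    f b ≤ f a * exp (K * (b - a)) := by
  have h := le_gronwallBound_of_liminf_deriv_right_le (f' := f') (δ := f a) (ε := 0)
    (fun x hx => (hf x hx).continuousAt.continuousWithinAt)
    (fun x hx _ hr => (hf x (Ico_subset_Icc_self hx)).hasDerivWithinAt.liminf_right_slope_le hr)
    le_rfl (by simpa using bound) b ⟨hab, le_rfl⟩
  rwa [gronwallBound_ε0] at h

theorem le_mul_exp_integral_of_hasDerivAt_le_mul {f f' g : ℝ → ℝ} {a b : ℝ} (hab : a ≤ b)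
    (hf : ∀ x ∈ Icc a b, HasDerivAt f (f' x) x) (hf_pos : ∀ x ∈ Icc a b, 0 < f x)
    (hg : IntervalIntegrable g volume a b) (bound : ∀ x ∈ Ioo a b, f' x ≤ g x * f x) :
    f b ≤ f a * exp (∫ x in a..b, g x) := by
  have h_log : log (f b) - log (f a) ≤ ∫ x in a..b, g x :=
    intervalIntegral.sub_le_integral_of_hasDeriv_right_of_le hab
      (ContinuousOn.log (fun x hx => (hf x hx).continuousAt.continuousWithinAt)
        fun x hx => (hf_pos x hx).ne')
      (fun x hx => ((hf x (Ioo_subset_Icc_self hx)).log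
        (hf_pos x (Ioo_subset_Icc_self hx)).ne').hasDerivWithinAt)
      ((intervalIntegrable_iff_integrableOn_Icc_of_le hab).mp hg)
      (fun x hx => (div_le_iff₀ (hf_pos x (Ioo_subset_Icc_self hx))).mpr (bound x hx))
  calc f b = exp (log (f b)) := (exp_log (hf_pos b ⟨hab, le_rfl⟩)).symm
    _ ≤ exp (log (f a) + ∫ x in a..b, g x) := exp_le_exp.mpr (by linarith)
    _ = f a * exp (∫ x in a..b, g x) := by rw [exp_add, exp_log (hf_pos a ⟨le_rfl, hab⟩)]

theorem le_mul_exp_integral_of_antitoneOn {f f' g : ℝ → ℝ} {a b : ℝ} (hab : a ≤ b)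
    (hf : ∀ x ∈ Icc a b, HasDerivAt f (f' x) x) (hf_anti : AntitoneOn f (Icc a b))
    (hfb : 0 ≤ f b) (bound : ∀ x ∈ Ioo a b, f' x ≤ g x * f x) :
    f b ≤ f a * exp (∫ x in a..b, g x) := by
  have ha : a ∈ Icc a b := ⟨le_rfl, hab⟩
  have hb : b ∈ Icc a b := ⟨hab, le_rfl⟩
  rcases hfb.eq_or_lt with hfb | hfb
  · rw [← hfb]
    exact mul_nonneg (hfb.le.trans (hf_anti ha hb hab)) (exp_pos _).le
  by_cases hg : IntervalIntegrable g volume a b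
  · exact le_mul_exp_integral_of_hasDerivAt_le_mul hab hf
      (fun x hx => hfb.trans_le (hf_anti hx hb hx.2)) hg bound
  -- a non-integrable `g` has integral `0`, and then monotonicity is the claim
  rw [intervalIntegral.integral_undef hg, exp_zero, mul_one]
  exact hf_anti ha hb hab

theorem antitoneOn_of_hasDerivAt_le_neg_mul {f f' : ℝ → ℝ} {k a : ℝ} (hk : 0 ≤ k)
    (hf_nonneg : ∀ t, a ≤ t → 0 ≤ f t) (hf : ∀ t, a ≤ t → HasDerivAt f (f' t) t)
    (bound : ∀ t, a ≤ t → f' t ≤ -k * f t) : AntitoneOn f (Ici a) := fun s hs t _ hst =>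
  have hs : a ≤ s := hs
  (le_mul_exp_of_hasDerivAt_le_mul hst (fun r hr => hf r (hs.trans hr.1))
    fun r hr => bound r (hs.trans hr.1)).trans
    (mul_le_of_le_one_right (hf_nonneg s hs) (exp_le_one_iff.mpr (by nlinarith)))

theorem tendsto_zero_of_hasDerivAt_le_neg_mul {f f' : ℝ → ℝ} {k a : ℝ} (hk : 0 < k)
    (hf_nonneg : ∀ t, a ≤ t → 0 ≤ f t) (hf : ∀ t, a ≤ t → HasDerivAt f (f' t) t)
    (bound : ∀ t, a ≤ t → f' t ≤ -k * f t) : Tendsto f atTop (nhds 0) := by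
  have h_exp : Tendsto (fun t => f a * exp (-k * (t - a))) atTop (nhds 0) := by
    have h_lin : Tendsto (fun t : ℝ => -k * (t - a)) atTop atBot :=
      (tendsto_atTop_add_const_right atTop (-a) tendsto_id).const_mul_atTop_of_neg (by linarith)
    simpa using (tendsto_exp_atBot.comp h_lin).const_mul (f a)
  refine tendsto_of_tendsto_of_tendsto_of_le_of_le' tendsto_const_nhds h_exp
    ((eventually_ge_atTop a).mono hf_nonneg) ((eventually_ge_atTop a).mono fun t ht => ?_)
  exact le_mul_exp_of_hasDerivAt_le_mul ht (fun r hr => hf r hr.1) fun r hr => bound r hr.1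

theorem exists_pos_forall_mul_sub_le_neg {α β : ℝ → ℝ} {T ℓ αmin βmax : ℝ} (hℓ : 0 ≤ ℓ)
    (hβmax_pos : 0 < βmax) (hαmin : ∀ t, T ≤ t → αmin ≤ α t) (hβmax : ∀ t, T ≤ t → β t ≤ βmax)
    (hℓ_lt : ℓ < αmin / βmax) : ∃ c > 0, ∀ t, T ≤ t → β t * ℓ - α t ≤ -c := by
  refine ⟨αmin - ℓ * βmax, by linarith [(lt_div_iff₀ hβmax_pos).mp hℓ_lt], fun t ht => ?_⟩
  linarith [mul_le_mul_of_nonneg_right (hβmax t ht) hℓ, hαmin t ht]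

section Consensus

variable {d N : ℕ}

theorem sum_sub_meanVec (v : Fin N → EuclideanSpace ℝ (Fin d)) :
    ∑ i, (v i - meanVec v) = 0 := by
  rcases N.eq_zero_or_pos with rfl | hN
  · simp
  rw [Finset.sum_sub_distrib, Finset.sum_const, Finset.card_univ, Fintype.card_fin, meanVec,
    ← Nat.cast_smul_eq_nsmul ℝ, smul_smul, mul_inv_cancel₀ (by positivity), one_smul, sub_self]

theorem bform_eq_inv_mul_sum_inner (v w : Fin N → EuclideanSpace ℝ (Fin d)) :
    bform v w = (N : ℝ)⁻¹ * ∑ i, ⟪v i - meanVec v, w i⟫_ℝ := by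
  rcases N.eq_zero_or_pos with rfl | hN
  · simp [bform]
  have h_sum : ∑ i, ∑ j, ⟪v i - v j, w i - w j⟫_ℝ
      = 2 * N * ∑ i, ⟪v i, w i⟫_ℝ - 2 * ∑ i, ∑ j, ⟪v j, w i⟫_ℝ := by
    have h_swap : ∑ i, ∑ j, ⟪v i, w j⟫_ℝ = ∑ i, ∑ j, ⟪v j, w i⟫_ℝ := Finset.sum_comm
    simp only [inner_sub_left, inner_sub_right, Finset.sum_sub_distrib, Finset.sum_const,
      Finset.card_univ, Fintype.card_fin, nsmul_eq_mul, h_swap, ← Finset.mul_sum]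
    ring
  have h_centered : ∑ i, ⟪v i - meanVec v, w i⟫_ℝ
      = ∑ i, ⟪v i, w i⟫_ℝ - (N : ℝ)⁻¹ * ∑ i, ∑ j, ⟪v j, w i⟫_ℝ := by
    simp only [meanVec, inner_sub_left, real_inner_smul_left, sum_inner,
      Finset.sum_sub_distrib, ← Finset.mul_sum]
  rw [bform, h_sum, h_centered]
  field_simp

theorem bform_self_eq_inv_mul_sum_sq (v : Fin N → EuclideanSpace ℝ (Fin d)) :
    bform v v = (N : ℝ)⁻¹ * ∑ i, ‖v i - meanVec v‖ ^ 2 := by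
  have h_mean : ∑ i, ⟪v i - meanVec v, meanVec v⟫_ℝ = 0 := by
    rw [← sum_inner, sum_sub_meanVec, inner_zero_left]
  rw [bform_eq_inv_mul_sum_inner]
  congr 1
  calc ∑ i, ⟪v i - meanVec v, v i⟫_ℝ
      = ∑ i, (‖v i - meanVec v‖ ^ 2 + ⟪v i - meanVec v, meanVec v⟫_ℝ) := by
        refine Finset.sum_congr rfl fun i _ => ?_
        rw [← real_inner_self_eq_norm_sq, ← inner_add_right, sub_add_cancel]
    _ = ∑ i, ‖v i - meanVec v‖ ^ 2 := by rw [Finset.sum_add_distrib, h_mean, add_zero]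

theorem bform_self_nonneg (v : Fin N → EuclideanSpace ℝ (Fin d)) : 0 ≤ bform v v := by
  rw [bform_self_eq_inv_mul_sum_sq]
  positivity

theorem norm_sub_meanVec_le_sqrt (v : Fin N → EuclideanSpace ℝ (Fin d)) (i : Fin N) :
    ‖v i - meanVec v‖ ≤ √(N * bform v v) := by
  have hN : (N : ℝ) ≠ 0 := Nat.cast_ne_zero.mpr (Fin.pos i).ne'
  refine Real.le_sqrt_of_sq_le ?_
  rw [bform_self_eq_inv_mul_sum_sq, mul_inv_cancel_left₀ hN]
  exact Finset.single_le_sum (f := fun j => ‖v j - meanVec v‖ ^ 2)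
    (fun j _ => sq_nonneg _) (Finset.mem_univ i)

theorem bform_add_right (v w₁ w₂ : Fin N → EuclideanSpace ℝ (Fin d)) :
    bform v (w₁ + w₂) = bform v w₁ + bform v w₂ := by
  simp only [bform, Pi.add_apply, add_sub_add_comm, inner_add_right, Finset.sum_add_distrib,
    mul_add]

theorem bform_smul_right (c : ℝ) (v w : Fin N → EuclideanSpace ℝ (Fin d)) :
    bform v (c • w) = c * bform v w := by
  simp only [bform, Pi.smul_apply, ← smul_sub, real_inner_smul_right, ← Finset.mul_sum]
  ring

theorem bform_meanVec_sub_self (v : Fin N → EuclideanSpace ℝ (Fin d)) :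
    bform v (fun i => meanVec v - v i) = -bform v v := by
  have h : ∀ i j, meanVec v - v i - (meanVec v - v j) = -(v i - v j) := fun i j => by abel
  simp only [bform, h, inner_neg_right, Finset.sum_neg_distrib, mul_neg]

theorem bform_alignment_nonpos (A : Fin N → Fin N → ℝ) (hA_symm : ∀ i j, A i j = A j i)
    (hA_nonneg : ∀ i j, 0 ≤ A i j) (v : Fin N → EuclideanSpace ℝ (Fin d)) :
    bform v (fun i => ∑ j, A i j • (v j - v i)) ≤ 0 := by
  have h_centered : ∀ i j, v j - v i = (v j - meanVec v) - (v i - meanVec v) := fun i j => by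
    abel
  rw [bform_eq_inv_mul_sum_inner]
  simp only [inner_sum, real_inner_smul_right, h_centered]
  exact mul_nonpos_of_nonneg_of_nonpos (by positivity)
    (sum_sum_mul_inner_sub_nonpos A hA_symm hA_nonneg _)

theorem bform_le_of_sum_inner_le {ℓ : ℝ} (v D : Fin N → EuclideanSpace ℝ (Fin d))
    (hD : ∑ i, ⟪D i, v i - meanVec v⟫_ℝ ≤ ℓ * ∑ i, ‖v i - meanVec v‖ ^ 2) :
    bform v D ≤ ℓ * bform v v := by
  have h_comm : ∑ i, ⟪v i - meanVec v, D i⟫_ℝ = ∑ i, ⟪D i, v i - meanVec v⟫_ℝ :=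
    Finset.sum_congr rfl fun i _ => real_inner_comm _ _
  rw [bform_eq_inv_mul_sum_inner, bform_self_eq_inv_mul_sum_sq, mul_left_comm ℓ, h_comm]
  exact mul_le_mul_of_nonneg_left hD (by positivity)

theorem bform_velocity_le (A : Fin N → Fin N → ℝ) (hA_symm : ∀ i j, A i j = A j i)
    (hA_nonneg : ∀ i j, 0 ≤ A i j) {α β ℓ : ℝ} (hβ : 0 ≤ β)
    (v D : Fin N → EuclideanSpace ℝ (Fin d))
    (hD : ∑ i, ⟪D i, v i - meanVec v⟫_ℝ ≤ ℓ * ∑ i, ‖v i - meanVec v‖ ^ 2) :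
    bform v (fun i => (N : ℝ)⁻¹ • ∑ j, A i j • (v j - v i) + α • (meanVec v - v i) + β • D i)
      ≤ (β * ℓ - α) * bform v v := by
  have h_align := mul_le_mul_of_nonneg_left (bform_alignment_nonpos A hA_symm hA_nonneg v)
    (inv_nonneg.mpr (Nat.cast_nonneg N))
  have h_pert := mul_le_mul_of_nonneg_left (bform_le_of_sum_inner_le v D hD) hβ
  change bform v ((N : ℝ)⁻¹ • (fun i => ∑ j, A i j • (v j - v i))
    + α • (fun i => meanVec v - v i) + β • D) ≤ _
  rw [bform_add_right, bform_add_right, bform_smul_right, bform_smul_right, bform_smul_right,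
    bform_meanVec_sub_self]
  linarith

theorem hasDerivAt_bform_self {v : ℝ → Fin N → EuclideanSpace ℝ (Fin d)}
    {w : Fin N → EuclideanSpace ℝ (Fin d)} {t : ℝ}
    (hv : ∀ i, HasDerivAt (fun s => v s i) (w i) t) :
    HasDerivAt (fun s => bform (v s) (v s)) (2 * bform (v t) w) t := by
  have h_sum : HasDerivAt (fun s => ∑ i, ∑ j, ⟪v s i - v s j, v s i - v s j⟫_ℝ)
      (∑ i, ∑ j, 2 * ⟪v t i - v t j, w i - w j⟫_ℝ) t := by
    refine HasDerivAt.fun_sum fun i _ => HasDerivAt.fun_sum fun j _ => ?_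
    refine (((hv i).sub (hv j)).inner ℝ ((hv i).sub (hv j))).congr_deriv ?_
    rw [Pi.sub_apply, real_inner_comm (w i - w j)]
    ring
  refine (h_sum.const_mul (2 * (N : ℝ) ^ 2)⁻¹).congr_deriv ?_
  simp only [bform, ← Finset.mul_sum]
  ring

end Consensus

theorem perturbedCuckerSmale_consensus_of_small_perturbation_general
    {d N : ℕ}
    (a : ℝ → ℝ)
    (ha_pos : ∀ r, 0 ≤ r → 0 < a r)
    (α β : ℝ → ℝ)
    (hβ : ∀ t, 0 ≤ t → 0 < β t)
    (Δ : Fin N → ℝ → EuclideanSpace ℝ (Fin d))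
    (x v : ℝ → Fin N → EuclideanSpace ℝ (Fin d))
    (hv : ∀ (i : Fin N), ∀ t, 0 ≤ t → HasDerivAt (fun s => v s i)
      ((N : ℝ)⁻¹ • ∑ j, a ‖x t i - x t j‖ • (v t j - v t i)
        + α t • (meanVec (v t) - v t i) + β t • Δ i t) t)
    (T : ℝ) (hT : 0 ≤ T)
    (ℓ αmin βmax : ℝ)
    (hαmin : ∀ t, T ≤ t → αmin ≤ α t)
    (hβmax : ∀ t, T ≤ t → β t ≤ βmax)
    (hℓ : ℓ < αmin / βmax)
    (φ : ℝ → ℝ) (hφ : ∀ t, T ≤ t → φ t ∈ Set.Icc 0 ℓ)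
    (hpert : ∀ t, T ≤ t →
      ∑ i, ⟪Δ i t, v t i - meanVec (v t)⟫_ℝ ≤ φ t * ∑ i, ‖v t i - meanVec (v t)‖ ^ 2) :
    (∀ t, T ≤ t → bform (v t) (v t) ≤
      bform (v T) (v T) * Real.exp (2 * ∫ s in T..t, β s * (ℓ - α s / β s))) ∧
    Tendsto (fun t => bform (v t) (v t)) atTop (nhds 0) ∧
    ∀ i, Tendsto (fun t => ‖v t i - meanVec (v t)‖) atTop (nhds 0) := by
  set V : ℝ → ℝ := fun t => bform (v t) (v t)
  set F : ℝ → Fin N → EuclideanSpace ℝ (Fin d) := fun t i =>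
    (N : ℝ)⁻¹ • ∑ j, a ‖x t i - x t j‖ • (v t j - v t i)
      + α t • (meanVec (v t) - v t i) + β t • Δ i t
  have hV_nonneg (t : ℝ) : 0 ≤ V t := bform_self_nonneg (v t)
  have hV_deriv (t : ℝ) (ht : T ≤ t) : HasDerivAt V (2 * bform (v t) (F t)) t :=
    hasDerivAt_bform_self fun i => hv i t (hT.trans ht)
  have hV_deriv_le (t : ℝ) (ht : T ≤ t) :
      2 * bform (v t) (F t) ≤ 2 * (β t * ℓ - α t) * V t := by
    have h_pert := (hpert t ht).trans (mul_le_mul_of_nonneg_right (hφ t ht).2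
      (Finset.sum_nonneg fun i _ => sq_nonneg ‖v t i - meanVec (v t)‖))
    have := bform_velocity_le (α := α t) (fun i j => a ‖x t i - x t j‖)
      (fun i j => by rw [norm_sub_rev]) (fun i j => (ha_pos _ (norm_nonneg _)).le)
      (hβ t (hT.trans ht)).le (v t) (fun i => Δ i t) h_pert
    linarith
  obtain ⟨c, hc, h_rate⟩ := exists_pos_forall_mul_sub_le_neg
    ((hφ T le_rfl).1.trans (hφ T le_rfl).2) ((hβ T hT).trans_le (hβmax T le_rfl)) hαmin hβmax hℓ
  have hV_deriv_le_neg (t : ℝ) (ht : T ≤ t) : 2 * bform (v t) (F t) ≤ -(2 * c) * V t := by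
    nlinarith [hV_deriv_le t ht, h_rate t ht, hV_nonneg t]
  have hV_anti : AntitoneOn V (Ici T) :=
    antitoneOn_of_hasDerivAt_le_neg_mul (by linarith) (fun t _ => hV_nonneg t) hV_deriv
      hV_deriv_le_neg
  have hV_tendsto : Tendsto V atTop (nhds 0) :=
    tendsto_zero_of_hasDerivAt_le_neg_mul (by linarith) (fun t _ => hV_nonneg t) hV_deriv
      hV_deriv_le_neg
  refine ⟨fun t ht => ?_, hV_tendsto, fun i => ?_⟩
  · rw [← intervalIntegral.integral_const_mul]
    refine le_mul_exp_integral_of_antitoneOn ht (fun r hr => hV_deriv r hr.1)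
      (hV_anti.mono Icc_subset_Ici_self) (hV_nonneg t) fun r hr => ?_
    rw [mul_sub, mul_div_cancel₀ _ (hβ r (hT.trans hr.1.le)).ne']
    exact hV_deriv_le r hr.1.le
  · refine squeeze_zero (fun t => norm_nonneg _) (fun t => norm_sub_meanVec_le_sqrt (v t) i) ?_
    simpa using (hV_tendsto.const_mul (N : ℝ)).sqrt

/-- If the perturbations satisfy
`∑ᵢ Δᵢ(t)·vᵢ^⊥(t) ≤ φ(t) ∑ᵢ ‖vᵢ^⊥(t)‖²` for `t ≥ T`, with `φ` taking values in
`[0,ℓ]` and `ℓ < (min_{t≥T} α)/(max_{t≥T} β)`, then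
`V(t) ≤ V(T) exp(2 ∫_T^t β(s)(ℓ - α(s)/β(s)) ds)`, `V(t) → 0` and the solution
tends to consensus. -/
theorem perturbedCuckerSmale_consensus_of_small_perturbation
    {d N : ℕ} (hN : 0 < N)
    (a : ℝ → ℝ)
    (ha_pos : ∀ r, 0 ≤ r → 0 < a r)
    (ha_mono : ∀ r s, 0 ≤ r → r ≤ s → a s ≤ a r)
    (ha_bdd : ∃ C, ∀ r, 0 ≤ r → a r ≤ C)
    (ha_lip : ∃ K : NNReal, LipschitzWith K a)
    (α β : ℝ → ℝ)
    (hα : ∀ t, 0 ≤ t → 0 ≤ α t) (hβ : ∀ t, 0 ≤ t → 0 < β t)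
    (Δ : Fin N → ℝ → EuclideanSpace ℝ (Fin d))
    (x v : ℝ → Fin N → EuclideanSpace ℝ (Fin d))
    (hx : ∀ (i : Fin N), ∀ t, 0 ≤ t → HasDerivAt (fun s => x s i) (v t i) t)
    (hv : ∀ (i : Fin N), ∀ t, 0 ≤ t → HasDerivAt (fun s => v s i)
      ((N : ℝ)⁻¹ • ∑ j, a ‖x t i - x t j‖ • (v t j - v t i)
        + α t • (meanVec (v t) - v t i) + β t • Δ i t) t)
    (T : ℝ) (hT : 0 ≤ T)
    (ℓ αmin βmax : ℝ)
    (hαmin : ∀ t, T ≤ t → αmin ≤ α t)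
    (hβmax : ∀ t, T ≤ t → β t ≤ βmax)
    (hℓ : ℓ < αmin / βmax)
    (φ : ℝ → ℝ) (hφ : ∀ t, T ≤ t → φ t ∈ Set.Icc 0 ℓ)
    (hpert : ∀ t, T ≤ t →
      ∑ i, ⟪Δ i t, v t i - meanVec (v t)⟫_ℝ ≤ φ t * ∑ i, ‖v t i - meanVec (v t)‖ ^ 2) :
    (∀ t, T ≤ t → bform (v t) (v t) ≤
      bform (v T) (v T) * Real.exp (2 * ∫ s in T..t, β s * (ℓ - α s / β s))) ∧
    Tendsto (fun t => bform (v t) (v t)) atTop (nhds 0) ∧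
    ∀ i, Tendsto (fun t => ‖v t i - meanVec (v t)‖) atTop (nhds 0) :=
  perturbedCuckerSmale_consensus_of_small_perturbation_general a ha_pos α β hβ Δ x v hv T hT ℓ αmin
    βmax hαmin hβmax hℓ φ hφ hpert
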